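/- arXiv:2304.03476 — 3 statements merged into one kernel-verified Lean document; each statement's English description precedes it below -/
import Mathlib

section
/- The Wald identity: suppose Z is independent of (Y(1), Y(0), D(1), D(0)) given X, the exclusion restriction Y = Y(D) holds with observed D = D(Z) and Y = Y(D(Z)), the no-interaction assumption gives E[Y(Z=1)−Y(Z=0)|X] = E[Y(1)−Y(0)|X]·E[D(1)−D(0)|X], and E[D|X,Z=1] − E[D|X,Z=0] ≠ 0. Then E[Y(1)−Y(0)|X] = (E[Y|X,Z=1] − E[Y|X,Z=0]) / (E[D|X,Z=1] − E[D|X,Z=0]). -/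
open Finset

variable {Ω : Type*}

/-- Probability of an event under mass function `p` on a finite space. -/
noncomputable def pr [Fintype Ω] (p : Ω → ℝ) (A : Set Ω) : ℝ :=
  ∑ ω, A.indicator p ω

/-- Conditional expectation of `f` given the event `A`. -/
noncomputable def cexp [Fintype Ω] (p : Ω → ℝ) (f : Ω → ℝ) (A : Set Ω) : ℝ :=
  (∑ ω, A.indicator (fun ω' => p ω' * f ω') ω) / pr p A

section helpers
variable [Fintype Ω]

lemma cexp_congr (p : Ω → ℝ) (f g : Ω → ℝ) (A : Set Ω) (h : ∀ ω ∈ A, f ω = g ω) :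
    cexp p f A = cexp p g A := by
  unfold cexp
  congr 1
  refine Finset.sum_congr rfl fun ω _ => ?_
  by_cases hω : ω ∈ A
  · simp [Set.indicator_of_mem hω, h ω hω]
  · simp [Set.indicator_of_notMem hω]

lemma cexp_sub (p : Ω → ℝ) (f g : Ω → ℝ) (A : Set Ω) :
    cexp p f A - cexp p g A = cexp p (fun ω => f ω - g ω) A := by
  unfold cexp
  rw [div_sub_div_same]
  congr 1
  rw [← Finset.sum_sub_distrib]
  refine Finset.sum_congr rfl fun ω _ => ?_
  by_cases hω : ω ∈ A
  · simp [Set.indicator_of_mem hω, mul_sub]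
  · simp [Set.indicator_of_notMem hω]

end helpers

/-- the Wald identity.  With Z ⫫ (Y(1),Y(0),D(1),D(0)) | X = x,
exclusion restriction / consistency Y = Y(D), D = D(Z), the no-interaction
decomposition E[Y(Z=1)−Y(Z=0)|X] = E[Y(1)−Y(0)|X]·E[D(1)−D(0)|X], and
relevance E[D|X,Z=1] − E[D|X,Z=0] ≠ 0, one has
E[Y(1)−Y(0)|X=x] = (E[Y|X=x,Z=1] − E[Y|X=x,Z=0])/(E[D|X=x,Z=1] − E[D|X=x,Z=0]). -/
theorem wald_identity {𝒳 : Type*} [Fintype Ω]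
    (p : Ω → ℝ) (hp : ∀ ω, 0 ≤ p ω) (hp1 : ∑ ω, p ω = 1)
    (X : Ω → 𝒳) (Z : Ω → Bool) (Yp : Bool → Ω → ℝ) (Dp : Bool → Ω → Bool)
    (D : Ω → Bool) (Y : Ω → ℝ)
    (hD : ∀ ω, D ω = Dp (Z ω) ω)      -- consistency for treatment received
    (hY : ∀ ω, Y ω = Yp (D ω) ω)      -- exclusion restriction + consistency
    (x : 𝒳)
    (hxpos : 0 < pr p {ω | X ω = x})
    (hzpos : ∀ z : Bool, 0 < pr p {ω | X ω = x ∧ Z ω = z})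
    -- conditional independence of Z and (Y(0),Y(1),D(0),D(1)) given X = x
    (hindep : ∀ (z : Bool) (y0 y1 : ℝ) (d0 d1 : Bool),
      pr p {ω | X ω = x ∧ Z ω = z ∧ Yp false ω = y0 ∧ Yp true ω = y1 ∧
              Dp false ω = d0 ∧ Dp true ω = d1} * pr p {ω | X ω = x}
        = pr p {ω | X ω = x ∧ Z ω = z} *
          pr p {ω | X ω = x ∧ Yp false ω = y0 ∧ Yp true ω = y1 ∧
              Dp false ω = d0 ∧ Dp true ω = d1})
    -- no-interaction decomposition of the conditional ITT effect
    (hnoint : cexp p (fun ω => Yp (Dp true ω) ω - Yp (Dp false ω) ω) {ω | X ω = x}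
      = cexp p (fun ω => Yp true ω - Yp false ω) {ω | X ω = x} *
        cexp p (fun ω => (if Dp true ω then (1 : ℝ) else 0)
                        - (if Dp false ω then (1 : ℝ) else 0)) {ω | X ω = x})
    -- relevance
    (hrel : cexp p (fun ω => if D ω then (1 : ℝ) else 0) {ω | X ω = x ∧ Z ω = true}
          - cexp p (fun ω => if D ω then (1 : ℝ) else 0) {ω | X ω = x ∧ Z ω = false} ≠ 0) :
    cexp p (fun ω => Yp true ω - Yp false ω) {ω | X ω = x}
      = (cexp p Y {ω | X ω = x ∧ Z ω = true} - cexp p Y {ω | X ω = x ∧ Z ω = false})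
        / (cexp p (fun ω => if D ω then (1 : ℝ) else 0) {ω | X ω = x ∧ Z ω = true}
          - cexp p (fun ω => if D ω then (1 : ℝ) else 0) {ω | X ω = x ∧ Z ω = false}) := by
  classical
  set A : Set Ω := {ω | X ω = x} with hA
  set T : Ω → ℝ × ℝ × Bool × Bool :=
    fun ω => (Yp false ω, Yp true ω, Dp false ω, Dp true ω) with hT
  -- grouping lemma: expand an expectation-type sum over the fibers of T
  have hgroup : ∀ (s : Set Ω) (G : ℝ × ℝ × Bool × Bool → ℝ),
      ∑ ω, s.indicator (fun ω' => p ω' * G (T ω')) ω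
        = ∑ v ∈ univ.image T, pr p {ω | ω ∈ s ∧ T ω = v} * G v := by
    intro s G
    have hpt : ∀ ω, ∑ v ∈ univ.image T,
        ({ω' | ω' ∈ s ∧ T ω' = v}).indicator p ω * G v
        = s.indicator (fun ω' => p ω' * G (T ω')) ω := by
      intro ω
      rw [Finset.sum_eq_single (T ω)]
      · by_cases hω : ω ∈ s
        · rw [Set.indicator_of_mem (show ω ∈ {ω' | ω' ∈ s ∧ T ω' = T ω} from ⟨hω, rfl⟩),
            Set.indicator_of_mem hω]
        · rw [Set.indicator_of_notMem (fun h => hω h.1),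
            Set.indicator_of_notMem hω, zero_mul]
      · intro v _ hv
        rw [Set.indicator_of_notMem (fun h => hv h.2.symm), zero_mul]
      · intro habs
        exact absurd (Finset.mem_image_of_mem T (Finset.mem_univ ω)) habs
    calc ∑ ω, s.indicator (fun ω' => p ω' * G (T ω')) ω
        = ∑ ω, ∑ v ∈ univ.image T,
            ({ω' | ω' ∈ s ∧ T ω' = v}).indicator p ω * G v :=
          Finset.sum_congr rfl fun ω _ => (hpt ω).symm
      _ = ∑ v ∈ univ.image T, ∑ ω,
            ({ω' | ω' ∈ s ∧ T ω' = v}).indicator p ω * G v := Finset.sum_comm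
      _ = ∑ v ∈ univ.image T, pr p {ω | ω ∈ s ∧ T ω = v} * G v := by
          refine Finset.sum_congr rfl fun v _ => ?_
          rw [pr, Finset.sum_mul]
  -- independence transfer
  have transfer : ∀ (z : Bool) (G : ℝ × ℝ × Bool × Bool → ℝ),
      cexp p (fun ω => G (T ω)) {ω | X ω = x ∧ Z ω = z}
        = cexp p (fun ω => G (T ω)) A := by
    intro z G
    have hAz := hzpos z
    unfold cexp
    rw [div_eq_div_iff hAz.ne' hxpos.ne', hgroup {ω | X ω = x ∧ Z ω = z} G,
      hgroup A G, Finset.sum_mul, Finset.sum_mul]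
    refine Finset.sum_congr rfl fun v _ => ?_
    have h1 : {ω | ω ∈ {ω | X ω = x ∧ Z ω = z} ∧ T ω = v}
        = {ω | X ω = x ∧ Z ω = z ∧ Yp false ω = v.1 ∧ Yp true ω = v.2.1 ∧
            Dp false ω = v.2.2.1 ∧ Dp true ω = v.2.2.2} := by
      ext ω; simp [hT, Prod.ext_iff, and_assoc]
    have h2 : {ω | ω ∈ A ∧ T ω = v}
        = {ω | X ω = x ∧ Yp false ω = v.1 ∧ Yp true ω = v.2.1 ∧
            Dp false ω = v.2.2.1 ∧ Dp true ω = v.2.2.2} := by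
      ext ω; simp [hA, hT, Prod.ext_iff, and_assoc]
    have hi := hindep z v.1 v.2.1 v.2.2.1 v.2.2.2
    rw [h1, h2]
    calc pr p {ω | X ω = x ∧ Z ω = z ∧ Yp false ω = v.1 ∧ Yp true ω = v.2.1 ∧
            Dp false ω = v.2.2.1 ∧ Dp true ω = v.2.2.2} * G v * pr p A
        = pr p {ω | X ω = x ∧ Z ω = z ∧ Yp false ω = v.1 ∧ Yp true ω = v.2.1 ∧
            Dp false ω = v.2.2.1 ∧ Dp true ω = v.2.2.2} * pr p A * G v := by ring
      _ = pr p {ω | X ω = x ∧ Z ω = z} *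
            pr p {ω | X ω = x ∧ Yp false ω = v.1 ∧ Yp true ω = v.2.1 ∧
            Dp false ω = v.2.2.1 ∧ Dp true ω = v.2.2.2} * G v := by rw [hi]
      _ = pr p {ω | X ω = x ∧ Yp false ω = v.1 ∧ Yp true ω = v.2.1 ∧
            Dp false ω = v.2.2.1 ∧ Dp true ω = v.2.2.2} * G v *
            pr p {ω | X ω = x ∧ Z ω = z} := by ring
  -- identify observed conditional expectations with potential ones
  have hYz : ∀ z : Bool, cexp p Y {ω | X ω = x ∧ Z ω = z}
      = cexp p (fun ω => if Dp z ω then Yp true ω else Yp false ω) A := by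
    intro z
    have e1 : cexp p Y {ω | X ω = x ∧ Z ω = z}
        = cexp p (fun ω => if Dp z ω then Yp true ω else Yp false ω)
            {ω | X ω = x ∧ Z ω = z} := by
      refine cexp_congr p _ _ _ fun ω hω => ?_
      have hz : Z ω = z := hω.2
      rw [hY ω, hD ω, hz]
      cases h : Dp z ω <;> simp [h]
    rw [e1]
    cases z
    · exact transfer false (fun v => if v.2.2.1 then v.2.1 else v.1)
    · exact transfer true (fun v => if v.2.2.2 then v.2.1 else v.1)
  have hDz : ∀ z : Bool,
      cexp p (fun ω => if D ω then (1:ℝ) else 0) {ω | X ω = x ∧ Z ω = z}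
      = cexp p (fun ω => if Dp z ω then (1:ℝ) else 0) A := by
    intro z
    have e1 : cexp p (fun ω => if D ω then (1:ℝ) else 0) {ω | X ω = x ∧ Z ω = z}
        = cexp p (fun ω => if Dp z ω then (1:ℝ) else 0) {ω | X ω = x ∧ Z ω = z} := by
      refine cexp_congr p _ _ _ fun ω hω => ?_
      have hz : Z ω = z := hω.2
      rw [hD ω, hz]
    rw [e1]
    cases z
    · exact transfer false (fun v => if v.2.2.1 then (1:ℝ) else 0)
    · exact transfer true (fun v => if v.2.2.2 then (1:ℝ) else 0)
  -- numerator and denominator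
  have hnum : cexp p Y {ω | X ω = x ∧ Z ω = true} - cexp p Y {ω | X ω = x ∧ Z ω = false}
      = cexp p (fun ω => Yp (Dp true ω) ω - Yp (Dp false ω) ω) A := by
    rw [hYz true, hYz false, cexp_sub]
    refine cexp_congr p _ _ _ fun ω _ => ?_
    cases h1 : Dp true ω <;> cases h0 : Dp false ω <;> simp [h1, h0]
  have hden : cexp p (fun ω => if D ω then (1:ℝ) else 0) {ω | X ω = x ∧ Z ω = true}
      - cexp p (fun ω => if D ω then (1:ℝ) else 0) {ω | X ω = x ∧ Z ω = false}
      = cexp p (fun ω => (if Dp true ω then (1:ℝ) else 0)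
          - (if Dp false ω then (1:ℝ) else 0)) A := by
    rw [hDz true, hDz false, cexp_sub]
  rw [hnum, hnoint, ← hden, mul_div_assoc, div_self hrel, mul_one]
end

section
/- Balke–Pearl lower bound validity (one inequality): under the core IV assumptions with Z independent of (Y(0),Y(1),D(0),D(1)) (conditionally on X), and observed Y = Y(D(Z)), D = D(Z), the conditional potential outcome mean satisfies E[Y(D=0)|X] ≥ P(Y=1, D=0 | X, Z=1) for binary Y. -/
open Finset

variable {Ω : Type*}

/-- validity of one Balke–Pearl lower bound.  Under the core IV
assumptions with Z ⫫ (Y(0),Y(1),D(0),D(1)) | X = x, binary outcome, and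
observed Y = Y(D(Z)), D = D(Z), one has
E[Y(D=0)|X=x] ≥ P(Y=1, D=0 | X=x, Z=1). -/
theorem balke_pearl_lower_bound {𝒳 : Type*} [Fintype Ω]
    (p : Ω → ℝ) (hp : ∀ ω, 0 ≤ p ω) (hp1 : ∑ ω, p ω = 1)
    (X : Ω → 𝒳) (Z : Ω → Bool) (Yp : Bool → Ω → ℝ) (Dp : Bool → Ω → Bool)
    (D : Ω → Bool) (Y : Ω → ℝ)
    (hbin : ∀ (d : Bool) (ω : Ω), Yp d ω = 0 ∨ Yp d ω = 1)   -- binary outcome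
    (hD : ∀ ω, D ω = Dp (Z ω) ω)                              -- consistency
    (hY : ∀ ω, Y ω = Yp (D ω) ω)                              -- exclusion + consistency
    (x : 𝒳)
    (hxpos : 0 < pr p {ω | X ω = x})
    (hzpos : 0 < pr p {ω | X ω = x ∧ Z ω = true})
    -- conditional independence of Z and (Y(0),Y(1),D(0),D(1)) given X = x
    (hindep : ∀ (z : Bool) (y0 y1 : ℝ) (d0 d1 : Bool),
      pr p {ω | X ω = x ∧ Z ω = z ∧ Yp false ω = y0 ∧ Yp true ω = y1 ∧
              Dp false ω = d0 ∧ Dp true ω = d1} * pr p {ω | X ω = x}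
        = pr p {ω | X ω = x ∧ Z ω = z} *
          pr p {ω | X ω = x ∧ Yp false ω = y0 ∧ Yp true ω = y1 ∧
              Dp false ω = d0 ∧ Dp true ω = d1}) :
    cexp p (Yp false) {ω | X ω = x}
      ≥ pr p {ω | Y ω = 1 ∧ D ω = false ∧ X ω = x ∧ Z ω = true}
          / pr p {ω | X ω = x ∧ Z ω = true} := by
  classical
  set px := pr p {ω | X ω = x} with hpx
  set pz := pr p {ω | X ω = x ∧ Z ω = true} with hpz
  -- refined atoms with Z = true
  set S : ℝ → Bool → Set Ω := fun y1 d0 =>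
    {ω | X ω = x ∧ Z ω = true ∧ Yp false ω = 1 ∧ Yp true ω = y1 ∧
      Dp false ω = d0 ∧ Dp true ω = false} with hS
  set B : ℝ → Bool → Set Ω := fun y1 d0 =>
    {ω | X ω = x ∧ Yp false ω = 1 ∧ Yp true ω = y1 ∧
      Dp false ω = d0 ∧ Dp true ω = false} with hB
  -- decompose the observed event
  have hdecomp : pr p {ω | Y ω = 1 ∧ D ω = false ∧ X ω = x ∧ Z ω = true}
      = ∑ y1 ∈ ({0,1} : Finset ℝ), ∑ d0 : Bool, pr p (S y1 d0) := by
    unfold pr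
    have h1 : ∑ ω, ({ω | Y ω = 1 ∧ D ω = false ∧ X ω = x ∧ Z ω = true} : Set Ω).indicator p ω
        = ∑ ω, ∑ y1 ∈ ({0,1} : Finset ℝ), ∑ d0 : Bool, (S y1 d0).indicator p ω := by
      refine Finset.sum_congr rfl fun ω _ => ?_
      rw [Finset.sum_pair (by norm_num : (0:ℝ) ≠ 1)]
      simp only [Fintype.sum_bool, hS]
      rcases hbin false ω with h0 | h0 <;> rcases hbin true ω with h1 | h1 <;>
        cases hz : Z ω <;> cases hd0 : Dp false ω <;> cases hd1 : Dp true ω <;>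
        by_cases hx : X ω = x <;>
        simp [Set.indicator_apply, Set.mem_setOf_eq, hD ω, hY ω, hz, hd0, hd1, hx, h0, h1]
    rw [h1, Finset.sum_comm]
    exact Finset.sum_congr rfl fun _ _ => Finset.sum_comm
  -- numerator of cexp
  set N := ∑ ω, ({ω | X ω = x} : Set Ω).indicator (fun ω' => p ω' * Yp false ω') ω with hN
  have hsumB : ∑ y1 ∈ ({0,1} : Finset ℝ), ∑ d0 : Bool, pr p (B y1 d0) ≤ N := by
    unfold pr
    rw [Finset.sum_comm]
    have : ∀ d0 : Bool, ∑ y1 ∈ ({0,1} : Finset ℝ), ∑ ω, (B y1 d0).indicator p ω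
        = ∑ ω, ∑ y1 ∈ ({0,1} : Finset ℝ), (B y1 d0).indicator p ω := fun d0 =>
      Finset.sum_comm
    rw [Fintype.sum_bool, this, this, ← Finset.sum_add_distrib]
    refine Finset.sum_le_sum fun ω _ => ?_
    rw [Finset.sum_pair (by norm_num : (0:ℝ) ≠ 1),
        Finset.sum_pair (by norm_num : (0:ℝ) ≠ 1)]
    simp only [hB]
    rcases hbin false ω with h0 | h0 <;> rcases hbin true ω with h1 | h1 <;>
      cases hd0 : Dp false ω <;> cases hd1 : Dp true ω <;>
      by_cases hx : X ω = x <;>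
      simp [Set.indicator_apply, Set.mem_setOf_eq, hd0, hd1, hx, h0, h1] <;>
      linarith [hp ω]
  -- use independence
  have hkey : pr p {ω | Y ω = 1 ∧ D ω = false ∧ X ω = x ∧ Z ω = true} * px
      = pz * ∑ y1 ∈ ({0,1} : Finset ℝ), ∑ d0 : Bool, pr p (B y1 d0) := by
    rw [hdecomp, Finset.sum_mul, Finset.mul_sum]
    refine Finset.sum_congr rfl fun y1 _ => ?_
    rw [Finset.sum_mul, Finset.mul_sum]
    refine Finset.sum_congr rfl fun d0 _ => ?_
    exact hindep true 1 y1 d0 false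
  have hcexp : cexp p (Yp false) {ω | X ω = x} = N / px := rfl
  rw [hcexp, ge_iff_le, div_le_div_iff₀ hzpos hxpos]
  calc pr p {ω | Y ω = 1 ∧ D ω = false ∧ X ω = x ∧ Z ω = true} * px
      = pz * ∑ y1 ∈ ({0,1} : Finset ℝ), ∑ d0 : Bool, pr p (B y1 d0) := hkey
    _ ≤ pz * N := by
        exact mul_le_mul_of_nonneg_left hsumB (le_of_lt hzpos)
    _ = N * pz := mul_comm _ _
end

section
/- Monotonicity excludes defiers and identifies compliance type probabilities: if D(1) ≥ D(0) almost surely and Z ⫫ (D(0), D(1)), then P(D(1)=1, D(0)=0) = E[D|Z=1] − E[D|Z=0], P(D(1)=1, D(0)=1) = E[D|Z=0], and P(D(1)=0, D(0)=0) = 1 − E[D|Z=1]. -/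
open Finset

variable {Ω : Type*}

/-- monotonicity D(1) ≥ D(0) and Z ⫫ (D(0), D(1)) identify the
compliance-type probabilities:
P(complier) = E[D|Z=1] − E[D|Z=0], P(always-taker) = E[D|Z=0],
P(never-taker) = 1 − E[D|Z=1]. -/
theorem compliance_type_probabilities [Fintype Ω]
    (p : Ω → ℝ) (hp : ∀ ω, 0 ≤ p ω) (hp1 : ∑ ω, p ω = 1)
    (Z : Ω → Bool) (Dp : Bool → Ω → Bool) (D : Ω → Bool)
    (hD : ∀ ω, D ω = Dp (Z ω) ω)                           -- consistency
    (hmono : ∀ ω, Dp false ω = true → Dp true ω = true)    -- monotonicity, no defiers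
    (hzpos : ∀ z : Bool, 0 < pr p {ω | Z ω = z})
    -- independence Z ⫫ (D(0), D(1))
    (hindep : ∀ (z d0 d1 : Bool),
      pr p {ω | Z ω = z ∧ Dp false ω = d0 ∧ Dp true ω = d1}
        = pr p {ω | Z ω = z} * pr p {ω | Dp false ω = d0 ∧ Dp true ω = d1}) :
    pr p {ω | Dp true ω = true ∧ Dp false ω = false}
      = cexp p (fun ω => if D ω then (1 : ℝ) else 0) {ω | Z ω = true}
      - cexp p (fun ω => if D ω then (1 : ℝ) else 0) {ω | Z ω = false} ∧
    pr p {ω | Dp true ω = true ∧ Dp false ω = true}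
      = cexp p (fun ω => if D ω then (1 : ℝ) else 0) {ω | Z ω = false} ∧
    pr p {ω | Dp true ω = false ∧ Dp false ω = false}
      = 1 - cexp p (fun ω => if D ω then (1 : ℝ) else 0) {ω | Z ω = true} := by

  classical
  have prS : ∀ A : Ω → Prop, pr p {ω | A ω} = ∑ ω, if A ω then p ω else 0 := by
    intro A
    unfold pr
    refine Finset.sum_congr rfl fun ω _ => ?_
    by_cases h : A ω <;> simp [Set.indicator_apply, h]
  -- conditional expectation formula
  have hnum : ∀ z : Bool,
      cexp p (fun ω => if D ω then (1 : ℝ) else 0) {ω | Z ω = z}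
        = pr p {ω | Z ω = z ∧ Dp z ω = true} / pr p {ω | Z ω = z} := by
    intro z
    unfold cexp
    rw [prS (fun ω => Z ω = z ∧ Dp z ω = true)]
    congr 1
    refine Finset.sum_congr rfl fun ω _ => ?_
    by_cases hz : Z ω = z
    · have hDz : D ω = Dp z ω := by rw [hD, hz]
      by_cases hd : Dp z ω = true <;>
        simp [Set.indicator_apply, hz, hDz, hd]
    · simp [Set.indicator_apply, hz]
  -- split for z = true
  have hsplitT : pr p {ω | Z ω = true ∧ Dp true ω = true}
      = pr p {ω | Z ω = true ∧ Dp false ω = false ∧ Dp true ω = true}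
        + pr p {ω | Z ω = true ∧ Dp false ω = true ∧ Dp true ω = true} := by
    rw [prS (fun ω => Z ω = true ∧ Dp true ω = true),
        prS (fun ω => Z ω = true ∧ Dp false ω = false ∧ Dp true ω = true),
        prS (fun ω => Z ω = true ∧ Dp false ω = true ∧ Dp true ω = true),
        ← Finset.sum_add_distrib]
    refine Finset.sum_congr rfl fun ω _ => ?_
    cases h0 : Dp false ω <;> cases h1 : Dp true ω <;>
      by_cases hz : Z ω = true <;> simp [h0, h1, hz]
  -- for z = false, monotonicity
  have hsplitF : pr p {ω | Z ω = false ∧ Dp false ω = true}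
      = pr p {ω | Z ω = false ∧ Dp false ω = true ∧ Dp true ω = true} := by
    rw [prS (fun ω => Z ω = false ∧ Dp false ω = true),
        prS (fun ω => Z ω = false ∧ Dp false ω = true ∧ Dp true ω = true)]
    refine Finset.sum_congr rfl fun ω _ => ?_
    by_cases h0 : Dp false ω = true
    · simp [h0, hmono ω h0]
    · simp [h0]
  have hT0 : pr p {ω | Z ω = true} ≠ 0 := ne_of_gt (hzpos true)
  have hF0 : pr p {ω | Z ω = false} ≠ 0 := ne_of_gt (hzpos false)
  have hET : cexp p (fun ω => if D ω then (1 : ℝ) else 0) {ω | Z ω = true}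
      = pr p {ω | Dp false ω = false ∧ Dp true ω = true}
        + pr p {ω | Dp false ω = true ∧ Dp true ω = true} := by
    rw [hnum true, hsplitT, hindep true false true, hindep true true true,
        ← mul_add, mul_div_assoc]
    field_simp
  have hEF : cexp p (fun ω => if D ω then (1 : ℝ) else 0) {ω | Z ω = false}
      = pr p {ω | Dp false ω = true ∧ Dp true ω = true} := by
    rw [hnum false, hsplitF, hindep false true true,
        mul_div_assoc]
    field_simp
  -- defiers have probability zero
  have hdef : pr p {ω | Dp false ω = true ∧ Dp true ω = false} = 0 := by
    rw [prS (fun ω => Dp false ω = true ∧ Dp true ω = false)]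
    refine Finset.sum_eq_zero fun ω _ => ?_
    by_cases h0 : Dp false ω = true
    · simp [h0, hmono ω h0]
    · simp [h0]
  -- total probability
  have htot : pr p {ω | Dp false ω = false ∧ Dp true ω = false}
      + pr p {ω | Dp false ω = false ∧ Dp true ω = true}
      + pr p {ω | Dp false ω = true ∧ Dp true ω = false}
      + pr p {ω | Dp false ω = true ∧ Dp true ω = true} = 1 := by
    rw [prS (fun ω => Dp false ω = false ∧ Dp true ω = false),
        prS (fun ω => Dp false ω = false ∧ Dp true ω = true),
        prS (fun ω => Dp false ω = true ∧ Dp true ω = false),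
        prS (fun ω => Dp false ω = true ∧ Dp true ω = true),
        ← Finset.sum_add_distrib, ← Finset.sum_add_distrib,
        ← Finset.sum_add_distrib, ← hp1]
    refine Finset.sum_congr rfl fun ω _ => ?_
    cases h0 : Dp false ω <;> cases h1 : Dp true ω <;> simp [h0, h1]
  -- swap the conjunction order in the goals
  have hswap : ∀ d0 d1 : Bool, pr p {ω | Dp true ω = d1 ∧ Dp false ω = d0}
      = pr p {ω | Dp false ω = d0 ∧ Dp true ω = d1} := by
    intro d0 d1
    rw [prS (fun ω => Dp true ω = d1 ∧ Dp false ω = d0),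
        prS (fun ω => Dp false ω = d0 ∧ Dp true ω = d1)]
    exact Finset.sum_congr rfl fun ω _ => by rw [and_comm]
  refine ⟨?_, ?_, ?_⟩
  · rw [hswap false true, hET, hEF]; ring
  · rw [hswap true true, hEF]
  · rw [hswap false false, hET]
    have := htot
    rw [hdef] at this
    linarith
end
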